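/- arXiv:0902.3254 — 2 statements merged into one kernel-verified Lean document; each statement's English description precedes it below -/
import Mathlib

section
/- Let a and b be integers greater than 1 such that a^m ≠ b^n for all positive integers m and n. Let k be a positive integer and let (γ_0, γ_1, …, γ_{k−2}, γ_{k−1}) be a k-tuple with γ_i ∈ {0, 1, …, a−1} for 0 ≤ i ≤ k−2 and γ_{k−1} ∈ {1, 2, …, a−1}. Then there exist infinitely many positive integers n such that b^n has leading k-digit string (γ_0, γ_1, …, γ_{k−2}, γ_{k−1}) with respect to a. -/
/-- The `i`-th digit of `n` in base `a`. -/
def digit (a n i : ℕ) : ℕ := n / a ^ i % a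

/-- `n` has leading `k`-digit string `(γ 0, …, γ (k-1))` with respect to base `a`:
if `r = Nat.log a n` is the position of the leading digit of `n`, then `k ≤ r + 1`
and the digit of `n` at position `r - k + 1 + i` equals `γ i` for `0 ≤ i < k`. -/
def hasLeadingDigits (a n k : ℕ) (γ : ℕ → ℕ) : Prop :=
  k ≤ Nat.log a n + 1 ∧ ∀ i, i < k → digit a n (Nat.log a n + 1 - k + i) = γ i

/-!
Let `N` be the number whose base-`a` digits are `γ`. The number `b ^ n` begins with these digits
as soon as `N * a ^ e < b ^ n < (N + 1) * a ^ e` for some `e`, i.e. as soon as `n * log_a b`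
lies, modulo `1`, in the interval `(log_a N, log_a (N + 1))`. As `a` and `b` are multiplicatively
independent, `θ = log_a b` is irrational, so Dirichlet's theorem gives `q > 0` such that `q * θ`
is within `ε` of an integer without being one; the multiples of `q * θ` then step through every
interval of length `ε` modulo `1`, arbitrarily far out.
-/

open Set

section Digits

variable {a n k : ℕ} {γ : ℕ → ℕ}

lemma hasLeadingDigits_of_div_pow {e : ℕ} (ha : 1 < a) (hn : a ^ e ≤ n)
    (h : hasLeadingDigits a (n / a ^ e) k γ) : hasLeadingDigits a n k γ := by
  have he : e ≤ Nat.log a n := Nat.le_log_of_pow_le ha hn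
  obtain ⟨hk, hγ⟩ := h
  rw [Nat.log_div_base_pow] at hk hγ
  refine ⟨by omega, fun i hi => ?_⟩
  rw [← hγ i hi, digit, digit, Nat.div_div_eq_div_mul, ← pow_add]
  congr 3
  omega

lemma hasLeadingDigits.pos (h : hasLeadingDigits a n k γ) (hk : 0 < k)
    (hlast : γ (k - 1) ≠ 0) : 0 < n := by
  refine Nat.pos_of_ne_zero fun hn => hlast ?_
  simpa [hn, digit] using (h.2 (k - 1) (by omega)).symm

lemma hasLeadingDigits_of_mul_pow_le_of_lt {N e : ℕ} (ha : 1 < a)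
    (hN : hasLeadingDigits a N k γ) (hN0 : 0 < N) (hle : N * a ^ e ≤ n)
    (hlt : n < (N + 1) * a ^ e) : hasLeadingDigits a n k γ :=
  hasLeadingDigits_of_div_pow ha ((Nat.le_mul_of_pos_left _ hN0).trans hle)
    (by rwa [Nat.div_eq_of_lt_le hle hlt])

lemma hasLeadingDigits_ofDigits (ha : 1 < a) (hk : 0 < k) (hγ : ∀ i < k, γ i < a)
    (hlast : γ (k - 1) ≠ 0) :
    hasLeadingDigits a (Nat.ofDigits a (List.ofFn fun i : Fin k => γ i)) k γ := by
  set L := List.ofFn fun i : Fin k => γ i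
  have hdigits : Nat.digits a (Nat.ofDigits a L) = L := by
    refine Nat.digits_ofDigits a ha L ?_ fun hL => by rwa [List.getLast_ofFn]
    simpa [L, List.mem_ofFn] using fun i : Fin k => hγ i i.2
  have hlog : Nat.log a (Nat.ofDigits a L) + 1 = k := by
    rw [← Nat.length_digits _ _ ha, hdigits, List.length_ofFn]
    intro h0
    rw [h0, Nat.digits_zero, eq_comm, List.ofFn_eq_nil_iff] at hdigits
    omega
  refine ⟨hlog.ge, fun i hi => ?_⟩
  rw [hlog, Nat.sub_self, zero_add, digit, ← Nat.getD_digits _ _ ha, hdigits]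
  simp [L, hi]

end Digits

section IrrationalRotation

lemma exists_nat_gt_mul_sub_int_mem_Ioo_of_pos {η ℓ : ℝ} (hη : 0 < η) (hηℓ : η < ℓ) (c : ℝ)
    (M : ℕ) : ∃ m : ℕ, M < m ∧ ∃ z : ℤ, m * η - c - z ∈ Ioo 0 ℓ := by
  set z : ℤ := ⌈M * η - c⌉
  set x := (c + z) / η
  have hxη : x * η = c + z := div_mul_cancel₀ _ hη.ne'
  have hMx : (M : ℝ) ≤ x := by
    rw [le_div_iff₀ hη]
    linarith [Int.le_ceil (M * η - c)]
  have hx : x < ⌊x⌋₊ + 1 := Nat.lt_floor_add_one x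
  have hfl : (⌊x⌋₊ : ℝ) ≤ x := Nat.floor_le ((Nat.cast_nonneg M).trans hMx)
  refine ⟨⌊x⌋₊ + 1, by exact_mod_cast hMx.trans_lt hx, z, ?_, ?_⟩ <;> push_cast
  · nlinarith
  · nlinarith

lemma exists_nat_gt_mul_sub_int_mem_Ioo {η ℓ : ℝ} (hη : η ≠ 0) (hηℓ : |η| < ℓ) (c : ℝ)
    (M : ℕ) : ∃ m : ℕ, M < m ∧ ∃ z : ℤ, m * η - c - z ∈ Ioo 0 ℓ := by
  rcases hη.lt_or_gt with hneg | hpos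
  · -- `y ↦ ℓ - y` maps `Ioo 0 ℓ` onto itself
    obtain ⟨m, hm, z, h0, h1⟩ := exists_nat_gt_mul_sub_int_mem_Ioo_of_pos (neg_pos.2 hneg)
      (by rwa [abs_of_neg hneg] at hηℓ) (-c - ℓ) M
    exact ⟨m, hm, -z, by push_cast; constructor <;> linarith⟩
  · exact exists_nat_gt_mul_sub_int_mem_Ioo_of_pos hpos (by rwa [abs_of_pos hpos] at hηℓ) c M

theorem Irrational.infinite_setOf_mul_sub_int_mem_Ioo {θ : ℝ} (hθ : Irrational θ) (c : ℝ)
    {ℓ : ℝ} (hℓ : 0 < ℓ) : {n : ℕ | ∃ z : ℤ, n * θ - c - z ∈ Ioo 0 ℓ}.Infinite := by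
  obtain ⟨Q, hQ⟩ := exists_nat_one_div_lt hℓ
  obtain ⟨q, hq, -, hqθ⟩ := Real.exists_nat_abs_mul_sub_round_le θ Q.succ_pos
  set η := q * θ - round (q * θ)
  have hη : η ≠ 0 := ((hθ.natCast_mul hq.ne').sub_intCast _).ne_zero
  have hηℓ : |η| < ℓ := by
    refine hqθ.trans_lt (lt_of_le_of_lt ?_ hQ)
    gcongr
    linarith
  refine Set.infinite_of_forall_exists_gt fun M => ?_
  obtain ⟨m, hm, z, hz⟩ := exists_nat_gt_mul_sub_int_mem_Ioo hη hηℓ c M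
  refine ⟨m * q, ⟨z + m * round (q * θ), ?_⟩, hm.trans_le (Nat.le_mul_of_pos_right m hq)⟩
  convert hz using 1
  push_cast
  ring

end IrrationalRotation

section Logarithms

open Real

variable {a : ℕ}

lemma irrational_logb_of_pow_ne_pow {b : ℕ} (ha : 1 < a) (hb : 1 < b)
    (h : ∀ m n : ℕ, 0 < m → 0 < n → a ^ m ≠ b ^ n) : Irrational (logb a b) := by
  have haR : (1 : ℝ) < a := by exact_mod_cast ha
  rintro ⟨q, hq⟩
  have hq0 : 0 < q := by exact_mod_cast hq ▸ logb_pos haR (by exact_mod_cast hb)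
  have hnum0 : 0 < q.num := Rat.num_pos.2 hq0
  have hnum : ((q.num.toNat : ℕ) : ℝ) = logb a b * q.den := by
    have : ((q.num.toNat : ℤ) : ℚ) = q * q.den := by
      rw [Int.toNat_of_nonneg hnum0.le, Rat.mul_den_eq_num]
    rw [← hq]
    exact_mod_cast this
  refine h q.num.toNat q.den (by omega) q.den_pos ?_
  have : (a : ℝ) ^ (q.num.toNat : ℕ) = (b : ℝ) ^ q.den := by
    rw [← rpow_natCast, hnum, rpow_mul (by positivity),
      rpow_logb (by positivity) haR.ne' (by positivity), rpow_natCast]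
  exact_mod_cast this

lemma logb_mul_pow_self {x : ℝ} (ha : 1 < a) (hx : x ≠ 0) (e : ℕ) :
    logb a (x * (a : ℝ) ^ e) = logb a x + e := by
  have haR : (1 : ℝ) < a := by exact_mod_cast ha
  rw [logb_mul hx (by positivity), logb_pow, logb_self_eq_one haR, mul_one]

lemma exists_mul_pow_lt_lt_of_logb_sub_mem_Ioo {N m : ℕ} {z : ℤ} (ha : 1 < a) (hN : 0 < N)
    (hm : N ≤ m) (h : logb a m - logb a N - z ∈ Ioo 0 (logb a (N + 1) - logb a N)) :
    ∃ e : ℕ, N * a ^ e < m ∧ m < (N + 1) * a ^ e := by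
  have haR : (1 : ℝ) < a := by exact_mod_cast ha
  have hNR : (0 : ℝ) < N := by exact_mod_cast hN
  have hmR : (0 : ℝ) < m := by exact_mod_cast hN.trans_le hm
  obtain ⟨h0, h1⟩ := h
  -- the interval has length at most `1` and `m ≥ N`, which rules out a negative exponent `z`
  have hz : 0 ≤ z := by
    by_contra! hz
    have hzR : (z : ℝ) ≤ -1 := by exact_mod_cast Int.le_sub_one_of_lt hz
    have hNa : (N : ℝ) + 1 ≤ N * (a : ℝ) ^ 1 := by
      have : (2 : ℝ) ≤ a := by exact_mod_cast ha
      have : (1 : ℝ) ≤ N := by exact_mod_cast hN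
      rw [pow_one]
      nlinarith
    have hlogNa : logb a (N + 1) ≤ logb a N + 1 := by
      have := logb_le_logb_of_le haR (by positivity) hNa
      rwa [logb_mul_pow_self ha hNR.ne', Nat.cast_one] at this
    have hmN : logb a N ≤ logb a m := logb_le_logb_of_le haR hNR (by exact_mod_cast hm)
    linarith
  lift z to ℕ using hz with e
  refine ⟨e, ?_, ?_⟩
  · have : logb a (N * (a : ℝ) ^ e) < logb a m := by
      rw [logb_mul_pow_self ha hNR.ne']
      push_cast at h0
      linarith
    exact_mod_cast (logb_lt_logb_iff haR (by positivity) hmR).1 this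
  · have : logb a m < logb a ((N + 1) * (a : ℝ) ^ e) := by
      rw [logb_mul_pow_self ha (by positivity)]
      push_cast at h1
      linarith
    exact_mod_cast (logb_lt_logb_iff haR hmR (by positivity)).1 this

end Logarithms

theorem stmt_10 (a b : ℕ) (ha : 1 < a) (hb : 1 < b)
    (h : ∀ m n : ℕ, 0 < m → 0 < n → a ^ m ≠ b ^ n)
    (k : ℕ) (hk : 0 < k) (γ : ℕ → ℕ)
    (hγ : ∀ i, i < k → γ i ≤ a - 1) (hlast : 1 ≤ γ (k - 1)) :
    {n : ℕ | 0 < n ∧ hasLeadingDigits a (b ^ n) k γ}.Infinite := by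
  set N := Nat.ofDigits a (List.ofFn fun i : Fin k => γ i)
  have hN : hasLeadingDigits a N k γ :=
    hasLeadingDigits_ofDigits ha hk (fun i hi => by have := hγ i hi; omega) (by omega)
  have hN0 : 0 < N := hN.pos hk (by omega)
  have hℓ : 0 < Real.logb a (N + 1) - Real.logb a N := by
    have := Real.logb_lt_logb (b := a) (by exact_mod_cast ha) (by exact_mod_cast hN0)
      (lt_add_one (N : ℝ))
    linarith
  have hS := (irrational_logb_of_pow_ne_pow ha hb h).infinite_setOf_mul_sub_int_mem_Ioo
    (Real.logb a N) hℓ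
  refine (hS.sdiff (finite_Iic N)).mono ?_
  rintro n ⟨⟨z, hz⟩, hnN⟩
  have hNn : N < n := not_le.1 hnN
  rw [← Real.logb_pow, ← Nat.cast_pow] at hz
  obtain ⟨e, hle, hlt⟩ := exists_mul_pow_lt_lt_of_logb_sub_mem_Ioo ha hN0
    (hNn.trans (Nat.lt_pow_self hb)).le hz
  exact ⟨hN0.trans hNn, hasLeadingDigits_of_mul_pow_le_of_lt ha hN hN0 hle.le hlt⟩
end

section
/- Let a and b be integers greater than 1, and consider the additive group ℤ with generating sets A = {a^i : i ≥ 0} and B = {b^j : j ≥ 0}, with associated metrics d_A and d_B. Then the metrics d_A and d_B are bi-Lipschitz equivalent if and only if there exist positive integers m and n such that a^m = b^n. -/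
/-- The word length of the integer `x` with respect to the generating set
`{a^i : i ≥ 0}` of the additive group ℤ: the least `k` such that `x` is a sum of
`k` terms, each of the form `a^i` or `-a^i` with `i` a nonnegative integer. -/
noncomputable def geomLength (a : ℤ) (x : ℤ) : ℕ :=
  sInf {n : ℕ | ∃ l : List ℤ, l.length = n ∧
    (∀ z ∈ l, ∃ i : ℕ, z = a ^ i ∨ z = -a ^ i) ∧ l.sum = x}

/-- The (real-valued) metric on ℤ associated to the generating set `{a^i : i ≥ 0}`:
`d_A(x,y) = ℓ_A(x - y)`. -/
noncomputable def geomDist (a : ℤ) (x y : ℤ) : ℝ :=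
  (geomLength a (x - y) : ℝ)

/-!
If `a ^ m = b ^ n`, writing `a ^ i = a ^ (i % m) * b ^ (n * (i / m))` shows that every power
of `a` is a sum of boundedly many signed powers of `b`, and vice versa; subadditivity of word
length turns this into the bi-Lipschitz bound.

Conversely, bi-Lipschitz equivalence gives `ℓ_b(a ^ i) ≤ C` for all `i`. If `log a / log b` were
irrational, the numbers `a ^ n / b ^ m` lying in `[1, b]` would be dense there. Each of them is a
sum of at most `C` signed powers of `b`, and since these terms sum to at most `b`, a gap argument
shows that the exponents may be taken at most `C² + 1` above `m`. Such sums form a compact countable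
set, which cannot contain `[1, b]`.
-/

open scoped Pointwise
open Set Filter Topology

def IsSignedPow (a z : ℤ) : Prop := ∃ i : ℕ, z = a ^ i ∨ z = -a ^ i

namespace IsSignedPow

variable {a z : ℤ}

lemma pow (a : ℤ) (i : ℕ) : IsSignedPow a (a ^ i) := ⟨i, .inl rfl⟩

lemma neg (h : IsSignedPow a z) : IsSignedPow a (-z) := by
  obtain ⟨i, rfl | rfl⟩ := h
  exacts [⟨i, .inr rfl⟩, ⟨i, .inl (neg_neg _)⟩]

lemma mul_pow (h : IsSignedPow a z) (n : ℕ) : IsSignedPow a (z * a ^ n) := by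
  obtain ⟨i, rfl | rfl⟩ := h
  exacts [⟨i + n, .inl (pow_add a i n).symm⟩, ⟨i + n, .inr (by rw [pow_add, neg_mul])⟩]

lemma pow_succ_dvd_of_pow_lt_abs {b : ℤ} (hb : 1 < b) (h : IsSignedPow b z)
    {r : ℕ} (hz : b ^ r < |z|) : b ^ (r + 1) ∣ z := by
  have key : ∀ i : ℕ, b ^ r < b ^ i → b ^ (r + 1) ∣ b ^ i := fun i hi =>
    pow_dvd_pow b ((pow_lt_pow_iff_right₀ hb).1 hi)
  have hb0 : 0 < b := by omega
  obtain ⟨i, rfl | rfl⟩ := h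
  · exact key i (by simpa [abs_of_pos hb0] using hz)
  · exact dvd_neg.2 (key i (by simpa [abs_of_pos hb0] using hz))

end IsSignedPow

lemma exists_list_isSignedPow_sum_eq (a x : ℤ) :
    ∃ l : List ℤ, (∀ z ∈ l, IsSignedPow a z) ∧ l.sum = x := by
  rcases le_or_gt 0 x with hx | hx
  · refine ⟨List.replicate x.toNat 1, fun z hz => ?_, by simp [hx]⟩
    rw [List.eq_of_mem_replicate hz]
    exact ⟨0, .inl (pow_zero a).symm⟩
  · refine ⟨List.replicate (-x).toNat (-1), fun z hz => ?_, by simp; omega⟩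
    rw [List.eq_of_mem_replicate hz]
    exact ⟨0, .inr (by rw [pow_zero])⟩

lemma exists_list_length_eq_geomLength (a x : ℤ) :
    ∃ l : List ℤ, l.length = geomLength a x ∧ (∀ z ∈ l, IsSignedPow a z) ∧ l.sum = x := by
  obtain ⟨l, hl, hsum⟩ := exists_list_isSignedPow_sum_eq a x
  have hne :
      {n | ∃ l : List ℤ, l.length = n ∧ (∀ z ∈ l, IsSignedPow a z) ∧ l.sum = x}.Nonempty :=
    ⟨l.length, l, rfl, hl, hsum⟩
  exact Nat.sInf_mem hne

lemma geomLength_sum_le {a : ℤ} {l : List ℤ} (hl : ∀ z ∈ l, IsSignedPow a z) :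
    geomLength a l.sum ≤ l.length :=
  Nat.sInf_le ⟨l, rfl, hl, rfl⟩

lemma geomLength_pow_le_one (a : ℤ) (i : ℕ) : geomLength a (a ^ i) ≤ 1 := by
  simpa using geomLength_sum_le (l := [a ^ i]) (by simpa using IsSignedPow.pow a i)

lemma geomLength_add_le (a x y : ℤ) :
    geomLength a (x + y) ≤ geomLength a x + geomLength a y := by
  obtain ⟨l, hlen, hl, rfl⟩ := exists_list_length_eq_geomLength a x
  obtain ⟨l', hlen', hl', rfl⟩ := exists_list_length_eq_geomLength a y
  rw [← hlen, ← hlen', ← List.length_append, ← List.sum_append]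
  exact geomLength_sum_le fun z hz => (List.mem_append.1 hz).elim (hl z) (hl' z)

lemma geomLength_list_sum_le (a : ℤ) (l : List ℤ) :
    geomLength a l.sum ≤ (l.map (geomLength a)).sum := by
  induction l with
  | nil => exact (geomLength_sum_le (l := []) (by simp)).trans_eq rfl
  | cons x l ih =>
    simpa using (geomLength_add_le a x l.sum).trans (Nat.add_le_add_left ih _)

lemma geomLength_neg_le (a x : ℤ) : geomLength a (-x) ≤ geomLength a x := by
  obtain ⟨l, hlen, hl, rfl⟩ := exists_list_length_eq_geomLength a x
  rw [List.sum_neg, ← hlen, ← List.length_map (f := fun z => -z)]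
  refine geomLength_sum_le fun z hz => ?_
  obtain ⟨w, hw, rfl⟩ := List.mem_map.1 hz
  exact (hl w hw).neg

@[simp]
lemma geomLength_neg (a x : ℤ) : geomLength a (-x) = geomLength a x :=
  (geomLength_neg_le a x).antisymm (by simpa using geomLength_neg_le a (-x))

lemma geomLength_mul_pow_le (a x : ℤ) (n : ℕ) :
    geomLength a (x * a ^ n) ≤ geomLength a x := by
  obtain ⟨l, hlen, hl, rfl⟩ := exists_list_length_eq_geomLength a x
  have hmul : (l.map (· * a ^ n)).sum = l.sum * a ^ n := by
    simpa using List.sum_map_mul_right (l := l) (f := id) (r := a ^ n)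
  rw [← hlen, ← hmul, ← List.length_map (f := (· * a ^ n))]
  refine geomLength_sum_le fun z hz => ?_
  obtain ⟨w, hw, rfl⟩ := List.mem_map.1 hz
  exact (hl w hw).mul_pow n

lemma geomLength_le_mul_of_forall_geomLength_pow_le {a b : ℤ} {C : ℕ}
    (hC : ∀ i : ℕ, geomLength b (a ^ i) ≤ C) (x : ℤ) :
    geomLength b x ≤ C * geomLength a x := by
  obtain ⟨l, hlen, hl, rfl⟩ := exists_list_length_eq_geomLength a x
  have hterm : ∀ z ∈ l, geomLength b z ≤ C := by
    intro z hz
    obtain ⟨i, rfl | rfl⟩ := hl z hz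
    exacts [hC i, (geomLength_neg b _).trans_le (hC i)]
  calc geomLength b l.sum ≤ (l.map (geomLength b)).sum := geomLength_list_sum_le b l
    _ ≤ l.length * C := by
      simpa using List.sum_le_card_nsmul (l.map (geomLength b)) C (by simpa using hterm)
    _ = C * geomLength a l.sum := by rw [hlen, mul_comm]

lemma exists_forall_geomLength_pow_le {a b : ℤ} {m n : ℕ} (hm : 0 < m) (h : a ^ m = b ^ n) :
    ∃ C : ℕ, ∀ i : ℕ, geomLength b (a ^ i) ≤ C := by
  refine ⟨(Finset.range m).sup fun r => geomLength b (a ^ r), fun i => ?_⟩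
  have hi : a ^ i = a ^ (i % m) * b ^ (n * (i / m)) := by
    rw [pow_mul, ← h, ← pow_mul, ← pow_add, Nat.mod_add_div]
  rw [hi]
  exact (geomLength_mul_pow_le b _ _).trans
    (Finset.le_sup (f := fun r => geomLength b (a ^ r)) (Finset.mem_range.2 (Nat.mod_lt i hm)))

lemma abs_list_sum_le {α : Type*} [AddCommGroup α] [LinearOrder α] [IsOrderedAddMonoid α]
    {l : List α} {c : α} (h : ∀ x ∈ l, |x| ≤ c) : |l.sum| ≤ l.length • c := by
  induction l with
  | nil => simp
  | cons x l ih =>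
    rw [List.sum_cons, List.length_cons, succ_nsmul']
    exact (abs_add_le x l.sum).trans
      (add_le_add (h x List.mem_cons_self) (ih fun y hy => h y (List.mem_cons_of_mem x hy)))

section Truncation

variable {b : ℤ} {l : List ℤ}

/-- The terms above the gap are divisible by `b^(M+g+1)` but sum to less than that in absolute
value, so they sum to zero. -/
lemma sum_filter_abs_le_eq_sum_of_gap (hb : 1 < b) (hl : ∀ z ∈ l, IsSignedPow b z) {M g : ℕ}
    (hlen : l.length < b ^ g) (hsum : |l.sum| ≤ b ^ M)
    (hgap : ∀ z ∈ l, |z| ≤ b ^ M ∨ b ^ (M + g) < |z|) :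
    (l.filter (|·| ≤ b ^ M)).sum = l.sum := by
  set low := (l.filter (|·| ≤ b ^ M)).sum
  set high := (l.filter (b ^ M < |·|)).sum
  have hsplit : low + high = l.sum := by
    simpa [low, high] using List.sum_map_filter_add_sum_map_filter_not (|·| ≤ b ^ M) id l
  have hlow : |low| ≤ l.length * b ^ M := by
    refine (abs_list_sum_le (c := b ^ M) fun z hz => ?_).trans ?_
    · simpa using (List.mem_filter.1 hz).2
    rw [nsmul_eq_mul]
    gcongr
    exact_mod_cast List.length_filter_le _ l
  have hdvd : b ^ (M + g + 1) ∣ high := by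
    refine List.dvd_sum fun z hz => ?_
    obtain ⟨hzl, hz⟩ := List.mem_filter.1 hz
    exact (hl z hzl).pow_succ_dvd_of_pow_lt_abs hb
      ((hgap z hzl).resolve_left (by simpa using hz))
  have hhigh : |high| < b ^ (M + g + 1) := by
    have hb0 : 0 < b ^ M := pow_pos (by omega) M
    calc |high| = |l.sum - low| := by rw [← hsplit, add_sub_cancel_left]
      _ ≤ |l.sum| + |low| := abs_sub _ _
      _ ≤ (l.length + 1) * b ^ M := by linarith
      _ ≤ b ^ g * b ^ M := by gcongr; omega
      _ = b ^ (M + g) := by ring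
      _ < b ^ (M + g + 1) := pow_lt_pow_right₀ hb (by omega)
  rw [← hsplit, Int.eq_zero_of_abs_lt_dvd hdvd hhigh, add_zero]

/-- Induction on `k`: either no term lies in `(b^M, b^(M+g)]` and the gap lemma applies, or one
does, and then fewer terms lie above `b^(M+g)` than above `b^M`. -/
lemma exists_sublist_sum_eq_of_length_filter_le (hb : 1 < b) (hl : ∀ z ∈ l, IsSignedPow b z)
    {g : ℕ} (hlen : l.length < b ^ g) (k : ℕ) :
    ∀ M : ℕ, |l.sum| ≤ b ^ M → (l.filter (b ^ M < |·|)).length ≤ k →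
      ∃ l' : List ℤ, l'.Sublist l ∧ (∀ z ∈ l', |z| ≤ b ^ (M + k * g)) ∧ l'.sum = l.sum := by
  induction k with
  | zero =>
    intro M _ hk
    refine ⟨l, .refl l, fun z hz => ?_, rfl⟩
    simpa using List.filter_eq_nil_iff.1 (List.length_eq_zero_iff.1 (Nat.le_zero.1 hk)) z hz
  | succ k ih =>
    intro M hsum hk
    by_cases hgap : ∀ z ∈ l, |z| ≤ b ^ M ∨ b ^ (M + g) < |z|
    · refine ⟨_, List.filter_sublist, fun z hz => ?_,
        sum_filter_abs_le_eq_sum_of_gap hb hl hlen hsum hgap⟩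
      exact (by simpa using (List.mem_filter.1 hz).2 : |z| ≤ b ^ M).trans
        (pow_le_pow_right₀ hb.le (by omega))
    push Not at hgap
    obtain ⟨z₀, hz₀, hz₀M, hz₀g⟩ := hgap
    have hcount : (l.filter (b ^ (M + g) < |·|)).length < (l.filter (b ^ M < |·|)).length := by
      have hfilter : (l.filter (b ^ M < |·|)).filter (b ^ (M + g) < |·|) =
          l.filter (b ^ (M + g) < |·|) := by
        rw [List.filter_filter]
        refine List.filter_congr fun z _ => ?_
        by_cases hz : b ^ (M + g) < |z|
        · have : b ^ M < |z| := (pow_le_pow_right₀ hb.le (by omega)).trans_lt hz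
          simp [hz, this]
        · simp [hz]
      rw [← hfilter]
      exact List.length_filter_lt_length_iff_exists.2
        ⟨z₀, List.mem_filter.2 ⟨hz₀, by simpa using hz₀M⟩, by simpa using hz₀g⟩
    obtain ⟨l', hsub, hbound, hsum'⟩ := ih (M + g)
      (hsum.trans (pow_le_pow_right₀ hb.le (by omega))) (by omega)
    exact ⟨l', hsub, fun z hz => (hbound z hz).trans_eq (by ring_nf), hsum'⟩

lemma exists_sublist_sum_eq_of_abs_sum_le (hb : 1 < b) (hl : ∀ z ∈ l, IsSignedPow b z) {M : ℕ}
    (hsum : |l.sum| ≤ b ^ M) :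
    ∃ l' : List ℤ, l'.Sublist l ∧ (∀ z ∈ l', |z| ≤ b ^ (M + l.length * l.length)) ∧
      l'.sum = l.sum := by
  have hlen : (l.length : ℤ) < b ^ l.length :=
    calc (l.length : ℤ) < 2 ^ l.length := by exact_mod_cast Nat.lt_two_pow_self
      _ ≤ b ^ l.length := pow_le_pow_left₀ (by norm_num) (by omega) _
  exact exists_sublist_sum_eq_of_length_filter_le hb hl hlen l.length M hsum
    (List.length_filter_le _ l)

end Truncation

section Sumset

variable {M : Type*} [AddMonoid M]

lemma list_sum_mem_nsmul_set {s : Set M} (h0 : 0 ∈ s) :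
    ∀ {l : List M} {k : ℕ}, (∀ x ∈ l, x ∈ s) → l.length ≤ k → l.sum ∈ k • s
  | [], k, _, _ => Set.zero_mem_nsmul h0
  | x :: l, k + 1, hl, hk => by
    rw [List.sum_cons, succ_nsmul']
    exact Set.add_mem_add (hl x List.mem_cons_self)
      (list_sum_mem_nsmul_set h0 (fun y hy => hl y (List.mem_cons_of_mem x hy))
        (by simpa using hk))

lemma Set.Countable.nsmul_set {s : Set M} (hs : s.Countable) : ∀ k : ℕ, (k • s).Countable
  | 0 => by rw [zero_nsmul]; exact countable_singleton 0
  | k + 1 => by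
    rw [succ_nsmul, ← Set.image2_add]
    exact (hs.nsmul_set k).image2 hs _

lemma IsCompact.nsmul_set [TopologicalSpace M] [ContinuousAdd M] {s : Set M} (hs : IsCompact s) :
    ∀ k : ℕ, IsCompact (k • s)
  | 0 => by simp
  | k + 1 => by
    rw [succ_nsmul]
    exact (hs.nsmul_set k).add hs

end Sumset

def signedPowers (b : ℝ) (T : ℤ) : Set ℝ :=
  insert 0 (range (fun n : ℕ => b ^ (T - n)) ∪ range (fun n : ℕ => -b ^ (T - n)))

lemma isCompact_signedPowers {b : ℝ} (hb : 1 < b) (T : ℤ) : IsCompact (signedPowers b T) := by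
  have hlim : Tendsto (fun n : ℕ => b ^ (T - n)) atTop (𝓝 0) := by
    have h := (tendsto_pow_atTop_nhds_zero_of_lt_one (inv_nonneg.2 (by positivity))
      (inv_lt_one_of_one_lt₀ hb)).const_mul (b ^ T)
    rw [mul_zero] at h
    refine h.congr fun n => ?_
    rw [zpow_sub₀ (by positivity), zpow_natCast, inv_pow, div_eq_mul_inv]
  rw [signedPowers, Set.insert_union_distrib]
  exact hlim.isCompact_insert_range.union (by simpa using hlim.neg.isCompact_insert_range)

lemma countable_signedPowers (b : ℝ) (T : ℤ) : (signedPowers b T).Countable :=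
  ((countable_range _).union (countable_range _)).insert 0

lemma pow_div_pow_mem_signedPowers {b : ℝ} (hb : b ≠ 0) {i m : ℕ} {T : ℤ}
    (h : (i : ℤ) ≤ m + T) :
    b ^ i / b ^ m ∈ signedPowers b T ∧ -b ^ i / b ^ m ∈ signedPowers b T := by
  have hexp : b ^ i / b ^ m = b ^ (T - ((m + T - i).toNat : ℕ)) := by
    rw [Int.toNat_of_nonneg (by omega), ← zpow_natCast, ← zpow_natCast, ← zpow_sub₀ hb]
    congr 1
    ring
  refine ⟨.inr (.inl ⟨_, hexp.symm⟩), .inr (.inr ⟨(m + T - i).toNat, ?_⟩)⟩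
  rw [neg_div, hexp]

lemma int_div_pow_mem_nsmul_signedPowers {b : ℤ} (hb : 1 < b) {x : ℤ} {C m : ℕ}
    (hC : geomLength b x ≤ C) (hx : |x| ≤ b ^ (m + 1)) :
    (x : ℝ) / (b : ℝ) ^ m ∈ C • signedPowers b (C * C + 1) := by
  obtain ⟨l, hlen, hl, rfl⟩ := exists_list_length_eq_geomLength b x
  obtain ⟨l', hsub, hbound, hsum⟩ := exists_sublist_sum_eq_of_abs_sum_le hb hl hx
  have hLC : l.length * l.length ≤ C * C := by rw [hlen]; exact Nat.mul_le_mul hC hC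
  have hdiv :
      ((l'.sum : ℤ) : ℝ) / (b : ℝ) ^ m = (l'.map fun z : ℤ => (z : ℝ) / (b : ℝ) ^ m).sum := by
    simp [div_eq_mul_inv, List.sum_map_mul_right]
  rw [← hsum, hdiv]
  refine list_sum_mem_nsmul_set (.inl rfl) (fun y hy => ?_)
    (by simpa using hsub.length_le.trans (hlen ▸ hC))
  obtain ⟨z, hz, rfl⟩ := List.mem_map.1 hy
  obtain ⟨i, hzi⟩ := hl z (hsub.subset hz)
  have hi : i ≤ m + 1 + l.length * l.length := by
    have habs : |z| = b ^ i := by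
      rcases hzi with rfl | rfl <;> simp [abs_of_pos (pow_pos (by omega : (0 : ℤ) < b) i)]
    exact (pow_le_pow_iff_right₀ hb).1 (habs ▸ hbound z hz)
  have hmem := pow_div_pow_mem_signedPowers (b := (b : ℝ)) (by positivity) (i := i) (m := m)
    (T := C * C + 1) (by exact_mod_cast (by omega : i ≤ m + (C * C + 1)))
  rcases hzi with rfl | rfl
  · simpa using hmem.1
  · simpa using hmem.2

lemma dense_setOf_nat_mul_add_int_mul {α β : ℝ} (hβ : 0 < β) (h : Irrational (α / β)) :
    Dense {x : ℝ | ∃ (n : ℕ) (k : ℤ), x = n * α + k * β} := by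
  have := Fact.mk hβ
  have hdense : DenseRange (fun n : ℕ => n • (α : AddCircle β)) :=
    denseRange_zsmul_iff_nsmul.1 (AddCircle.denseRange_zsmul_coe_iff.2 h)
  rw [DenseRange, ← QuotientAddGroup.dense_preimage_mk] at hdense
  convert hdense using 1
  ext x
  have key : ∀ y : ℝ, (y : AddCircle β) = x ↔ ∃ k : ℤ, x = y + k * β := fun y => by
    rw [eq_comm, ← sub_eq_zero, ← AddCircle.coe_sub, AddCircle.coe_eq_zero_iff]
    simp only [zsmul_eq_mul, eq_sub_iff_add_eq, eq_comm (b := x), add_comm]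
  simp only [mem_ofPred_eq, mem_preimage, mem_range, ← AddCircle.coe_nsmul, key, nsmul_eq_mul]

lemma Icc_subset_closure_pow_div_pow {a b : ℝ} (ha : 1 < a) (hb : 1 < b)
    (h : Irrational (Real.log a / Real.log b)) :
    Icc 1 b ⊆ closure {x | ∃ n m : ℕ, a ^ n ≤ b ^ (m + 1) ∧ x = a ^ n / b ^ m} := by
  have hla := Real.log_pos ha
  have hlb := Real.log_pos hb
  set G := {x : ℝ | ∃ (n : ℕ) (k : ℤ), x = n * Real.log a + k * Real.log b}
  have hG : Ioo 0 (Real.log b) ⊆ closure (Ioo 0 (Real.log b) ∩ G) :=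
    (dense_setOf_nat_mul_add_int_mul hlb h).open_subset_closure_inter isOpen_Ioo
  have himage : Real.exp '' (Ioo 0 (Real.log b) ∩ G) ⊆
      {x | ∃ n m : ℕ, a ^ n ≤ b ^ (m + 1) ∧ x = a ^ n / b ^ m} := by
    rintro _ ⟨_, ⟨⟨hx0, hxb⟩, n, k, rfl⟩, rfl⟩
    have hk : k ≤ 0 := by
      by_contra! hk
      have : (1 : ℝ) ≤ k := by exact_mod_cast hk
      nlinarith [mul_nonneg (Nat.cast_nonneg n) hla.le]
    obtain ⟨m, rfl⟩ := Int.exists_eq_neg_ofNat hk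
    have hexp : Real.exp (n * Real.log a + ((-m : ℤ) : ℝ) * Real.log b) = a ^ n / b ^ m := by
      rw [Int.cast_neg, Int.cast_natCast, neg_mul, ← sub_eq_add_neg, Real.exp_sub,
        Real.exp_nat_mul, Real.exp_nat_mul, Real.exp_log (by linarith), Real.exp_log (by linarith)]
    refine ⟨n, m, ?_, hexp⟩
    have := Real.exp_lt_exp.2 hxb
    rw [hexp, Real.exp_log (by linarith), div_lt_iff₀ (by positivity), ← pow_succ'] at this
    exact this.le
  intro y ⟨hy1, hyb⟩
  have hy : Real.log y ∈ closure (Ioo 0 (Real.log b) ∩ G) := by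
    refine closure_minimal hG isClosed_closure ?_
    rw [closure_Ioo hlb.ne]
    exact ⟨Real.log_nonneg hy1, Real.log_le_log (by linarith) hyb⟩
  rw [← Real.exp_log (by linarith : 0 < y)]
  exact closure_mono himage
    (image_closure_subset_closure_image Real.continuous_exp (mem_image_of_mem _ hy))

lemma exists_pow_eq_pow_of_not_irrational {a b : ℤ} (ha : 1 < a) (hb : 1 < b)
    (h : ¬Irrational (Real.log a / Real.log b)) : ∃ m n : ℕ, 0 < m ∧ 0 < n ∧ a ^ m = b ^ n := by
  have ha' : (1 : ℝ) < a := by exact_mod_cast ha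
  have hb' : (1 : ℝ) < b := by exact_mod_cast hb
  obtain ⟨q, hq⟩ := not_not.1 h
  have hq0 : 0 < q := by
    have : (0 : ℝ) < q := hq ▸ div_pos (Real.log_pos ha') (Real.log_pos hb')
    exact_mod_cast this
  have hnum := Rat.num_pos.2 hq0
  refine ⟨q.den, q.num.toNat, q.pos, by omega, ?_⟩
  have hlog : Real.log ((a : ℝ) ^ q.den) = Real.log ((b : ℝ) ^ q.num.toNat) := by
    rw [Real.log_pow, Real.log_pow, Rat.cast_def, div_eq_div_iff (by positivity)
      (Real.log_pos hb').ne'] at *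
    have : ((q.num.toNat : ℕ) : ℝ) = q.num := by exact_mod_cast Int.toNat_of_nonneg hnum.le
    rw [this]
    linarith
  exact_mod_cast Real.log_injOn_pos (mem_Ioi.2 (pow_pos (zero_lt_one.trans ha') _))
    (mem_Ioi.2 (pow_pos (zero_lt_one.trans hb') _)) hlog

lemma not_irrational_of_forall_geomLength_pow_le {a b : ℤ} (ha : 1 < a) (hb : 1 < b) {C : ℕ}
    (hC : ∀ i : ℕ, geomLength b (a ^ i) ≤ C) : ¬Irrational (Real.log a / Real.log b) := by
  intro h
  have hb' : (1 : ℝ) < b := by exact_mod_cast hb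
  have hsub : Icc (1 : ℝ) b ⊆ C • signedPowers b (C * C + 1) := by
    refine (Icc_subset_closure_pow_div_pow (by exact_mod_cast ha) hb' h).trans ?_
    rw [((isCompact_signedPowers hb' _).nsmul_set C).isClosed.closure_subset_iff]
    rintro _ ⟨n, m, hnm, rfl⟩
    have hnm' : |a ^ n| ≤ b ^ (m + 1) := by
      rw [abs_of_pos (pow_pos (by omega) n)]
      exact_mod_cast hnm
    simpa using int_div_pow_mem_nsmul_signedPowers hb (hC n) hnm'
  have hvol := (((countable_signedPowers _ _).nsmul_set C).mono hsub).measure_zero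
    MeasureTheory.volume
  rw [Real.volume_Icc, ENNReal.ofReal_eq_zero] at hvol
  linarith

lemma geomDist_le_mul_geomDist {a b : ℤ} {C : ℕ} (hC : ∀ i : ℕ, geomLength b (a ^ i) ≤ C)
    {K : ℝ} (hCK : (C : ℝ) ≤ K) (x y : ℤ) : geomDist b x y ≤ K * geomDist a x y :=
  calc geomDist b x y ≤ C * geomDist a x y := by
        unfold geomDist
        exact_mod_cast geomLength_le_mul_of_forall_geomLength_pow_le hC (x - y)
    _ ≤ K * geomDist a x y := mul_le_mul_of_nonneg_right hCK (Nat.cast_nonneg _)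

theorem stmt_14 (a b : ℤ) (ha : 1 < a) (hb : 1 < b) :
    (∃ K : ℝ, 1 ≤ K ∧ ∀ x y : ℤ,
      (1 / K) * geomDist a x y ≤ geomDist b x y ∧
      geomDist b x y ≤ K * geomDist a x y) ↔
    (∃ m n : ℕ, 0 < m ∧ 0 < n ∧ a ^ m = b ^ n) := by
  constructor
  · rintro ⟨K, hK1, hK⟩
    refine exists_pow_eq_pow_of_not_irrational ha hb
      (not_irrational_of_forall_geomLength_pow_le ha hb (C := ⌊K⌋₊) fun i => Nat.le_floor ?_)
    calc (geomLength b (a ^ i) : ℝ) = geomDist b (a ^ i) 0 := by simp [geomDist]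
      _ ≤ K * geomDist a (a ^ i) 0 := (hK _ _).2
      _ ≤ K * 1 := by
        gcongr
        simpa [geomDist] using geomLength_pow_le_one a i
      _ = K := mul_one K
  · rintro ⟨m, n, hm, hn, h⟩
    obtain ⟨C₁, hC₁⟩ := exists_forall_geomLength_pow_le hm h
    obtain ⟨C₂, hC₂⟩ := exists_forall_geomLength_pow_le hn h.symm
    set K : ℝ := max 1 (max (C₁ : ℝ) C₂)
    have hK1 : 1 ≤ K := le_max_left _ _
    have hC₁K : (C₁ : ℝ) ≤ K := le_max_of_le_right (le_max_left _ _)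
    have hC₂K : (C₂ : ℝ) ≤ K := le_max_of_le_right (le_max_right _ _)
    refine ⟨K, hK1, fun x y => ⟨?_, geomDist_le_mul_geomDist hC₁ hC₁K x y⟩⟩
    rw [one_div, inv_mul_le_iff₀ (by linarith)]
    exact geomDist_le_mul_geomDist hC₂ hC₂K x y
end
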